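/- arXiv:2006.05053 — 2 statements merged into one kernel-verified Lean document; each statement's English description precedes it below -/
import Mathlib

section
/- Under the action Υ, the ego-centric (body-fixed) landmark coordinates transform by rotation and scaling: if (P', p'_i) = Υ((A,(Q,a)_i), (P, p_i)), then for each i, R_{P'}ᵀ(p'_i − x_{P'}) = a_i⁻¹ Q_iᵀ R_Pᵀ(p_i − x_P), and consequently the range transforms as ‖p'_i − x_{P'}‖ = a_i⁻¹ ‖p_i − x_P‖. -/
/-! The translation `x_{PA}` cancels, leaving `a_i⁻¹ R_{PA} Q_iᵀ R_Pᵀ (p_i - x_P)`. Undoing the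
orthogonal `R_{PA}` gives the ego-centric identity, and since `R_{PA}`, `Q_iᵀ` and `R_Pᵀ` are all
orthogonal they preserve the Euclidean norm, so only the factor `a_i⁻¹ > 0` changes the range. -/

open Matrix

noncomputable def enorm3 (v : Fin 3 → ℝ) : ℝ := ‖(EuclideanSpace.equiv (Fin 3) ℝ).symm v‖

namespace Matrix

variable {ι : Type*} [Fintype ι] [DecidableEq ι] {M : Matrix ι ι ℝ}

theorem transpose_mulVec_mulVec_of_mem_orthogonalGroup (hM : M ∈ orthogonalGroup ι ℝ)
    (v : ι → ℝ) : Mᵀ *ᵥ (M *ᵥ v) = v := by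
  rw [mulVec_mulVec, (mem_orthogonalGroup_iff' ι ℝ).1 hM, one_mulVec]

theorem transpose_mem_orthogonalGroup (hM : M ∈ orthogonalGroup ι ℝ) :
    Mᵀ ∈ orthogonalGroup ι ℝ :=
  Unitary.star_mem hM

theorem norm_toLp_mulVec_of_mem_orthogonalGroup (hM : M ∈ orthogonalGroup ι ℝ) (v : ι → ℝ) :
    ‖WithLp.toLp 2 (M *ᵥ v)‖ = ‖WithLp.toLp 2 v‖ := by
  rw [← sq_eq_sq₀ (norm_nonneg _) (norm_nonneg _), ← real_inner_self_eq_norm_sq,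
    ← real_inner_self_eq_norm_sq, EuclideanSpace.inner_toLp_toLp,
    EuclideanSpace.inner_toLp_toLp, star_trivial, star_trivial, dotProduct_mulVec,
    ← mulVec_transpose, transpose_mulVec_mulVec_of_mem_orthogonalGroup hM]

end Matrix

theorem enorm3_smul (c : ℝ) (v : Fin 3 → ℝ) : enorm3 (c • v) = |c| * enorm3 v :=
  norm_smul c _

theorem enorm3_mulVec_of_mem_orthogonalGroup {M : Matrix (Fin 3) (Fin 3) ℝ}
    (hM : M ∈ orthogonalGroup (Fin 3) ℝ) (v : Fin 3 → ℝ) : enorm3 (M *ᵥ v) = enorm3 v :=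
  norm_toLp_mulVec_of_mem_orthogonalGroup hM v

/-- Under the action `Υ`, where
`(P', p'_i) = Υ((A,(Q,a)_i), (P, p_i)) = (PA, (a_i⁻¹ R_{PA} Q_iᵀ R_Pᵀ(p_i − x_P) + x_{PA})_i)`
with `R_{PA} = R_P R_A` and `x_{PA} = R_P x_A + x_P`, the ego-centric landmark
coordinates transform as `R_{P'}ᵀ(p'_i − x_{P'}) = a_i⁻¹ Q_iᵀ R_Pᵀ(p_i − x_P)`, and
consequently the range transforms as `‖p'_i − x_{P'}‖ = a_i⁻¹ ‖p_i − x_P‖`. -/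
theorem egocentric_transform (n : ℕ)
    (A : Matrix (Fin 3) (Fin 3) ℝ) (xA : Fin 3 → ℝ)
    (Q : Fin n → Matrix (Fin 3) (Fin 3) ℝ) (a : Fin n → ℝ)
    (P : Matrix (Fin 3) (Fin 3) ℝ) (xP : Fin 3 → ℝ) (p : Fin n → Fin 3 → ℝ)
    (hA : Aᵀ * A = 1 ∧ A.det = 1)
    (hQ : ∀ i, (Q i)ᵀ * Q i = 1 ∧ (Q i).det = 1)
    (ha : ∀ i, 0 < a i)
    (hP : Pᵀ * P = 1 ∧ P.det = 1) :
    ∀ i,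
      (P * A)ᵀ *ᵥ
          (((a i)⁻¹ • ((P * A) *ᵥ ((Q i)ᵀ *ᵥ (Pᵀ *ᵥ (p i - xP)))) + (P *ᵥ xA + xP))
            - (P *ᵥ xA + xP))
        = (a i)⁻¹ • ((Q i)ᵀ *ᵥ (Pᵀ *ᵥ (p i - xP))) ∧
      enorm3 ((((a i)⁻¹ • ((P * A) *ᵥ ((Q i)ᵀ *ᵥ (Pᵀ *ᵥ (p i - xP)))) + (P *ᵥ xA + xP))
            - (P *ᵥ xA + xP)))
        = (a i)⁻¹ * enorm3 (p i - xP) := by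
  intro i
  have hP' : P ∈ orthogonalGroup (Fin 3) ℝ := (mem_orthogonalGroup_iff' _ _).2 hP.1
  have hQ' : Q i ∈ orthogonalGroup (Fin 3) ℝ := (mem_orthogonalGroup_iff' _ _).2 (hQ i).1
  have hPA : P * A ∈ orthogonalGroup (Fin 3) ℝ :=
    mul_mem hP' ((mem_orthogonalGroup_iff' _ _).2 hA.1)
  rw [add_sub_cancel_right]
  refine ⟨by rw [mulVec_smul, transpose_mulVec_mulVec_of_mem_orthogonalGroup hPA], ?_⟩
  rw [enorm3_smul, abs_of_pos (inv_pos.2 (ha i)), enorm3_mulVec_of_mem_orthogonalGroup hPA,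
    enorm3_mulVec_of_mem_orthogonalGroup (transpose_mem_orthogonalGroup hQ'),
    enorm3_mulVec_of_mem_orthogonalGroup (transpose_mem_orthogonalGroup hP')]
end

section
/- Derivative of the bearing alignment: let ẙ, δ ∈ ℝ³ be unit vectors with 1 + δᵀẙ ≠ 0, let w ∈ ℝ³, let r, r̂ be nonzero reals, and let k ∈ ℝ. Define the skew matrix Γ = (δᵀw/(2r̂) − (δ + ẙ)ᵀw/(r̂(1 + δᵀẙ)) − k)·(δ × ẙ)^×. Then ẙᵀ[ ((ẙ × w)/r̂ − (δ × w)/r) × δ − Γδ ] = ((r − r̂)/(r·r̂))·ẙᵀ(w − δ(δᵀw)) − (δᵀw/(2r̂) − k)·(1 − (δᵀẙ)²). -/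
/-! Expanding the vector triple products by `(a × b) × c = (aᵀc) b − (bᵀc) a` and using
`|ẙ| = |δ| = 1` turns the left side into a polynomial in `δᵀẙ`, `ẙᵀw`, `δᵀw`. The `1/r̂` part
of the measurement term differs from that of the right side by `−(1 − δᵀẙ)(δ + ẙ)ᵀw / r̂`,
and this is exactly cancelled by the `(δ + ẙ)ᵀw / (r̂(1 + δᵀẙ))` part of `Γ`, which enters
multiplied by `1 − (δᵀẙ)² = (1 − δᵀẙ)(1 + δᵀẙ)`. -/

open Matrix

/-- The skew-symmetric matrix `v^×` with `v^× u = v × u`. -/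
def skew (v : Fin 3 → ℝ) : Matrix (Fin 3) (Fin 3) ℝ :=
  !![0, -v 2, v 1; v 2, 0, -v 0; -v 1, v 0, 0]

theorem enorm3_sq (v : Fin 3 → ℝ) : enorm3 v ^ 2 = v ⬝ᵥ v := by
  rw [enorm3, EuclideanSpace.real_norm_sq_eq]
  simp [dotProduct, sq]

theorem dotProduct_self_eq_one_of_enorm3_eq_one {v : Fin 3 → ℝ} (hv : enorm3 v = 1) :
    v ⬝ᵥ v = 1 := by
  rw [← enorm3_sq, hv, one_pow]

theorem skew_mulVec (v u : Fin 3 → ℝ) : skew v *ᵥ u = v ⨯₃ u := by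
  ext i
  fin_cases i <;> simp [skew, cross_apply, mulVec, dotProduct, Fin.sum_univ_three,
    sub_eq_add_neg, add_comm]

theorem dotProduct_cross_sub_skew_mulVec {y δ : Fin 3 → ℝ} (hy : y ⬝ᵥ y = 1) (hδ : δ ⬝ᵥ δ = 1)
    (w : Fin 3 → ℝ) (a b l : ℝ) :
    y ⬝ᵥ ((a • (y ⨯₃ w) - b • (δ ⨯₃ w)) ⨯₃ δ - (l • skew (δ ⨯₃ y)) *ᵥ δ)
      = a * ((δ ⬝ᵥ y) * (y ⬝ᵥ w) - δ ⬝ᵥ w) - b * (y ⬝ᵥ w - (δ ⬝ᵥ y) * (δ ⬝ᵥ w))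
        - l * (1 - (δ ⬝ᵥ y) ^ 2) := by
  simp only [smul_mulVec, skew_mulVec, LinearMap.map_sub₂, LinearMap.map_smul₂,
    cross_cross_eq_smul_sub_smul, dotProduct_sub, dotProduct_smul, smul_eq_mul, hy, hδ]
  simp only [dotProduct_comm y δ, dotProduct_comm w δ]
  ring

/-- Derivative of the bearing alignment: for unit vectors `ẙ, δ` with `1 + δᵀẙ ≠ 0`,
`w ∈ ℝ³`, nonzero `r, r̂` and `k ∈ ℝ`, with the rotational innovation
`Γ = (δᵀw/(2r̂) − (δ + ẙ)ᵀw/(r̂(1 + δᵀẙ)) − k)·(δ × ẙ)^×`, one has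
`ẙᵀ[((ẙ × w)/r̂ − (δ × w)/r) × δ − Γδ]
  = ((r − r̂)/(r·r̂))·ẙᵀ(w − δ(δᵀw)) − (δᵀw/(2r̂) − k)·(1 − (δᵀẙ)²)`. -/
theorem bearing_alignment_derivative (yo δ w : Fin 3 → ℝ) (r rh k : ℝ)
    (hyo : enorm3 yo = 1) (hδ : enorm3 δ = 1) (hx : 1 + δ ⬝ᵥ yo ≠ 0)
    (hr : r ≠ 0) (hrh : rh ≠ 0)
    (Γ : Matrix (Fin 3) (Fin 3) ℝ)
    (hΓ : Γ = ((δ ⬝ᵥ w) / (2 * rh) - ((δ + yo) ⬝ᵥ w) / (rh * (1 + δ ⬝ᵥ yo)) - k) •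
      skew (δ ⨯₃ yo)) :
    yo ⬝ᵥ ((rh⁻¹ • (yo ⨯₃ w) - r⁻¹ • (δ ⨯₃ w)) ⨯₃ δ - Γ *ᵥ δ)
      = ((r - rh) / (r * rh)) * (yo ⬝ᵥ (w - (δ ⬝ᵥ w) • δ))
        - ((δ ⬝ᵥ w) / (2 * rh) - k) * (1 - (δ ⬝ᵥ yo) ^ 2) := by
  subst hΓ
  rw [dotProduct_cross_sub_skew_mulVec (dotProduct_self_eq_one_of_enorm3_eq_one hyo)
      (dotProduct_self_eq_one_of_enorm3_eq_one hδ),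
    dotProduct_sub, dotProduct_smul, smul_eq_mul, add_dotProduct, dotProduct_comm yo δ]
  field_simp
  ring
end
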